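/- In the birational representation above, the translation $T_1=\pi s_2 s_1$ acts on parameters by $(a_0,a_1,a_2)\mapsto(qa_0,q^{-1}a_1,a_2)$ where $q=a_0a_1a_2$, and acts on the $f$-variables by $T_1(f_1)=\frac{qc^2}{f_1 f_0}\cdot\frac{1+a_0 f_0}{a_0+f_0}$ and $T_1(f_0)=\frac{qc^2}{f_0\,T_1(f_1)}\cdot\frac{1+a_2a_0\,T_1(f_1)}{a_2a_0+T_1(f_1)}$, where $qc^2=f_0f_1f_2$. -/

import Mathlib

/-! Each $s_i$ inverts $a_i$, multiplies $a_{i\pm1}$ by $a_i$, fixes $f_i$, and multiplies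
$f_{i+1}$ (divides $f_{i-1}$) by $r_i=(a_i+f_i)/(1+a_if_i)$. Pushing $\pi s_2 s_1$ through
these rules gives $T_1(f_1)=f_2/r_0$ with $r_0=(a_0+f_0)/(1+a_0f_0)$, and $T_1(f_0)=f_1r_0/r'$,
where $r'$ is the ratio of the second reflection, whose $f$-entry is already $T_1(f_1)$ and
whose $a$-entry is $a_2a_0$. Eliminating $r_0=f_2/T_1(f_1)$ gives the stated form. -/

/-- The Cartan matrix of type $A_2^{(1)}$: $a_{ii}=2$, $a_{ij}=-1$ for $i\neq j$. -/
def cartanA2 (i j : ZMod 3) : ℤ := if i = j then 2 else -1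

/-- The orientation matrix $U$: $u_{01}=u_{12}=u_{20}=1$, skew-symmetric, $u_{ii}=0$. -/
def orientU (i j : ZMod 3) : ℤ := if j = i + 1 then 1 else if j = i - 1 then -1 else 0

/-- The transformation $s_i$ on the variables $(a;f)$:
$s_i(a_j)=a_j a_i^{-a_{ij}}$, $s_i(f_j)=f_j\left(\frac{a_i+f_i}{1+a_if_i}\right)^{u_{ij}}$. -/
noncomputable def weylS {K : Type*} [Field K] (i : ZMod 3)
    (x : (ZMod 3 → K) × (ZMod 3 → K)) : (ZMod 3 → K) × (ZMod 3 → K) :=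
  (fun j => x.1 j * x.1 i ^ (-(cartanA2 i j)),
   fun j => x.2 j * ((x.1 i + x.2 i) / (1 + x.1 i * x.2 i)) ^ (orientU i j))

/-- The diagram rotation $\pi$: $\pi(a_i)=a_{i+1}$, $\pi(f_i)=f_{i+1}$. -/
def weylPi {K : Type*} (x : (ZMod 3 → K) × (ZMod 3 → K)) :
    (ZMod 3 → K) × (ZMod 3 → K) :=
  (fun j => x.1 (j + 1), fun j => x.2 (j + 1))

/-- The translation $T_1=\pi s_2 s_1$ (acting on the variables from the right). -/
noncomputable def mapT1 {K : Type*} [Field K] (x : (ZMod 3 → K) × (ZMod 3 → K)) :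
    (ZMod 3 → K) × (ZMod 3 → K) := weylS 1 (weylS 2 (weylPi x))

section WeylS

variable {K : Type*} [Field K] (x : (ZMod 3 → K) × (ZMod 3 → K)) {i j : ZMod 3}

theorem orientU_self (i : ZMod 3) : orientU i i = 0 := by
  revert i; decide

theorem orientU_of_eq_add_one (h : j = i + 1) : orientU i j = 1 := by
  simp [orientU, h]

theorem orientU_of_eq_sub_one (h : j = i - 1) : orientU i j = -1 := by
  subst h; revert i; decide

theorem weylS_fst_self : (weylS i x).1 i = (x.1 i)⁻¹ := by
  rcases eq_or_ne (x.1 i) 0 with h | h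
  · simp [weylS, h]
  · simp only [weylS, cartanA2, if_pos, zpow_neg, zpow_ofNat]
    field_simp

theorem weylS_fst_of_ne (h : j ≠ i) : (weylS i x).1 j = x.1 j * x.1 i := by
  simp [weylS, cartanA2, Ne.symm h]

theorem weylS_snd_self : (weylS i x).2 i = x.2 i := by
  simp [weylS, orientU_self]

theorem weylS_snd_of_eq_add_one (h : j = i + 1) :
    (weylS i x).2 j = x.2 j * ((x.1 i + x.2 i) / (1 + x.1 i * x.2 i)) := by
  simp [weylS, orientU_of_eq_add_one h]

theorem weylS_snd_of_eq_sub_one (h : j = i - 1) :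
    (weylS i x).2 j = x.2 j / ((x.1 i + x.2 i) / (1 + x.1 i * x.2 i)) := by
  simp [weylS, orientU_of_eq_sub_one h, div_eq_mul_inv]

end WeylS

section MapT1

variable {K : Type*} [Field K] (a f : ZMod 3 → K)

-- The closing `rfl`s evaluate the leftover indices such as `2 + 1 : ZMod 3` to numerals.

theorem mapT1_fst_zero : (mapT1 (a, f)).1 0 = a 1 * a 0 * (a 2 * a 0) := by
  simp (disch := decide) only [mapT1, weylS_fst_of_ne, weylPi]
  rfl

theorem mapT1_fst_one : (mapT1 (a, f)).1 1 = (a 2 * a 0)⁻¹ := by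
  simp (disch := decide) only [mapT1, weylS_fst_self, weylS_fst_of_ne, weylPi]
  rfl

theorem mapT1_fst_two : (mapT1 (a, f)).1 2 = (a 0)⁻¹ * (a 2 * a 0) := by
  simp (disch := decide) only [mapT1, weylS_fst_self, weylS_fst_of_ne, weylPi]
  rfl

theorem mapT1_snd_one :
    (mapT1 (a, f)).2 1 = f 2 / ((a 0 + f 0) / (1 + a 0 * f 0)) := by
  simp (disch := decide) only [mapT1, weylS_snd_self, weylS_snd_of_eq_sub_one, weylPi]
  rfl

theorem mapT1_snd_zero :
    (mapT1 (a, f)).2 0 = f 1 * ((a 0 + f 0) / (1 + a 0 * f 0)) /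
      ((a 2 * a 0 + (mapT1 (a, f)).2 1) / (1 + a 2 * a 0 * (mapT1 (a, f)).2 1)) := by
  simp (disch := decide) only [mapT1, weylS_snd_self, weylS_snd_of_eq_sub_one,
    weylS_snd_of_eq_add_one, weylS_fst_of_ne, weylPi]
  rfl

end MapT1

theorem stmt17_general {K : Type*} [Field K] (a f a' f' : ZMod 3 → K)
    (ha : ∀ i, a i ≠ 0) (hf : ∀ i, f i ≠ 0)
    (h1 : ∀ i, a i + f i ≠ 0) (h2 : ∀ i, 1 + a i * f i ≠ 0)
    (hT : mapT1 (a, f) = (a', f')) :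
    a' 0 = (a 0 * a 1 * a 2) * a 0 ∧
    a' 1 = a 1 / (a 0 * a 1 * a 2) ∧
    a' 2 = a 2 ∧
    f' 1 = (f 0 * f 1 * f 2) / (f 1 * f 0) * ((1 + a 0 * f 0) / (a 0 + f 0)) ∧
    f' 0 = (f 0 * f 1 * f 2) / (f 0 * f' 1) * ((1 + a 2 * a 0 * f' 1) / (a 2 * a 0 + f' 1)) := by
  obtain ⟨rfl, rfl⟩ : (mapT1 (a, f)).1 = a' ∧ (mapT1 (a, f)).2 = f' := Prod.ext_iff.mp hT
  have hf'1 : (mapT1 (a, f)).2 1 = f 2 * (1 + a 0 * f 0) / (a 0 + f 0) := by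
    rw [mapT1_snd_one, div_div_eq_mul_div]
  refine ⟨?_, ?_, ?_, ?_, ?_⟩
  · rw [mapT1_fst_zero]; ring
  · rw [mapT1_fst_one]; field_simp [ha 1]
  · rw [mapT1_fst_two]; field_simp [ha 0]
  · rw [hf'1]; field_simp [hf 0, hf 1]
  · rw [mapT1_snd_zero, div_eq_mul_inv _ (_ / _), inv_div]
    congr 1
    rw [hf'1]
    field_simp [hf 0, hf 2, h1 0, h2 0]

theorem stmt17 {K : Type*} [Field K] (a f a' f' : ZMod 3 → K)
    (ha : ∀ i, a i ≠ 0) (hf : ∀ i, f i ≠ 0)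
    (h1 : ∀ i, a i + f i ≠ 0) (h2 : ∀ i, 1 + a i * f i ≠ 0)
    (hT : mapT1 (a, f) = (a', f'))
    (hden : a 2 * a 0 + f' 1 ≠ 0) :
    a' 0 = (a 0 * a 1 * a 2) * a 0 ∧
    a' 1 = a 1 / (a 0 * a 1 * a 2) ∧
    a' 2 = a 2 ∧
    f' 1 = (f 0 * f 1 * f 2) / (f 1 * f 0) * ((1 + a 0 * f 0) / (a 0 + f 0)) ∧
    f' 0 = (f 0 * f 1 * f 2) / (f 0 * f' 1) * ((1 + a 2 * a 0 * f' 1) / (a 2 * a 0 + f' 1)) :=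
  stmt17_general a f a' f' ha hf h1 h2 hT
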